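/- Let Z, X, X' be binary observables on H_A and |ψ⟩ ∈ H_A ⊗ H_B such that ‖{Z,X}⊗Id|ψ⟩‖² ≤ δ and ‖{Z,X'}⊗Id|ψ⟩‖² ≤ δ. Then there exist δ' = O(√δ), an isometry V: H_A → ℂ²⊗H_{A'}, and commuting Hermitian operators A_X, A_Y on H_{A'} with A_X² + A_Y² = Id, such that under V (i.e. up to error δ' in the state-dependent norm on |ψ⟩): Z ≃ σ_Z⊗Id, X ≃ σ_X⊗Id, and X' ≃ σ_X⊗A_X + σ_Y⊗A_Y. -/

import Mathlib

/-!
Let `P₊, P₋` be the spectral projections of `Z` and `V φ = |0⟩ ⊗ P₊ φ + |1⟩ ⊗ X P₋ φ`. As `X` is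
unitary, `V` is an isometry, and `V† (σ_Z ⊗ 1) V = P₊ - P₋ = Z` exactly. Conjugating `σ_X ⊗ 1`
gives the off-diagonal part `P₊ X P₋ + P₋ X P₊` of `X`. Taking for `A_X, A_Y` the real and
imaginary parts of the unitary `U = X X'` (they commute and `A_X² + A_Y² = U* U = 1`, since `U` is
normal), `A_X - i A_Y = X' X` and `A_X + i A_Y = X X'`, so conjugating `σ_X ⊗ A_X + σ_Y ⊗ A_Y`
gives the off-diagonal part of `X'`. An observable `Y` differs from its off-diagonal part by
`P₊ Y P₊ + P₋ Y P₋ = ½ Z {Z, Y}`, whose squared state norm is at most `min(δ, 4) / 4 ≤ √δ`.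
-/

open Matrix
open scoped Kronecker

noncomputable def pauliZ : Matrix (Fin 2) (Fin 2) ℂ := !![1, 0; 0, -1]
noncomputable def pauliX : Matrix (Fin 2) (Fin 2) ℂ := !![0, 1; 1, 0]
noncomputable def pauliY : Matrix (Fin 2) (Fin 2) ℂ := !![0, -Complex.I; Complex.I, 0]

/-- The squared ℓ² norm of a bipartite state vector. -/
noncomputable def vecNormSq {a b : ℕ} (v : Fin a × Fin b → ℂ) : ℝ :=
  ∑ p, ‖v p‖ ^ 2

lemma IsSelfAdjoint.mem_unitary_of_mul_self {R : Type*} [Monoid R] [StarMul R] {U : R}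
    (hU : IsSelfAdjoint U) (h : U * U = 1) : U ∈ unitary R :=
  Unitary.mem_iff.2 ⟨by rw [hU.star_eq, h], by rw [hU.star_eq, h]⟩

section SpectralProjections

variable {A : Type*} [Ring A] [Algebra ℂ A]

noncomputable def posProj (Z : A) : A := (1 / 2 : ℂ) • (1 + Z)

noncomputable def negProj (Z : A) : A := (1 / 2 : ℂ) • (1 - Z)

noncomputable def offDiagPart (Z Y : A) : A :=
  posProj Z * Y * negProj Z + negProj Z * Y * posProj Z

lemma posProj_add_negProj (Z : A) : posProj Z + negProj Z = 1 := by
  unfold posProj negProj; module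

lemma posProj_sub_negProj (Z : A) : posProj Z - negProj Z = Z := by
  unfold posProj negProj; module

variable {Z : A}

lemma posProj_mul_self (hZ : Z * Z = 1) : posProj Z * posProj Z = posProj Z := by
  simp only [posProj, smul_mul_smul, add_mul, mul_add, one_mul, mul_one, hZ]; module

lemma negProj_mul_self (hZ : Z * Z = 1) : negProj Z * negProj Z = negProj Z := by
  simp only [negProj, smul_mul_smul, sub_mul, mul_sub, one_mul, mul_one, hZ]; module

lemma sub_offDiagPart (hZ : Z * Z = 1) (Y : A) :
    Y - offDiagPart Z Y = (1 / 2 : ℂ) • (Z * (Z * Y + Y * Z)) := by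
  have hZZ : ∀ M : A, Z * (Z * M) = M := fun M => by rw [← mul_assoc, hZ, one_mul]
  simp only [offDiagPart, posProj, negProj, smul_mul_assoc, mul_smul_comm, add_mul,
    mul_add, sub_mul, mul_sub, one_mul, mul_one, mul_assoc, hZZ]
  module

variable [StarRing A] [StarModule ℂ A]

lemma IsSelfAdjoint.posProj (hZ : IsSelfAdjoint Z) : IsSelfAdjoint (posProj Z) := by
  simp [IsSelfAdjoint, _root_.posProj, star_smul, hZ.star_eq]

lemma IsSelfAdjoint.negProj (hZ : IsSelfAdjoint Z) : IsSelfAdjoint (negProj Z) := by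
  simp [IsSelfAdjoint, _root_.negProj, star_smul, hZ.star_eq]

end SpectralProjections

section BlockColumn

variable {ι m n α : Type*} [Fintype ι] [Fintype m]

def blockCol (C : ι → Matrix m n α) : Matrix (ι × m) n α := of fun p j => C p.1 p.2 j

lemma conjTranspose_blockCol_mul_kronecker_mul_blockCol [CommSemiring α] [StarRing α]
    (C : ι → Matrix m n α) (M : Matrix ι ι α) (N : Matrix m m α) :
    (blockCol C)ᴴ * (M ⊗ₖ N) * blockCol C = ∑ i, ∑ j, M i j • ((C i)ᴴ * N * C j) := by
  ext x y
  simp only [blockCol, mul_apply, conjTranspose_apply, of_apply, kroneckerMap_apply,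
    Fintype.sum_prod_type, Matrix.sum_apply, Matrix.smul_apply, smul_eq_mul, Finset.sum_mul,
    Finset.mul_sum]
  conv_lhs => enter [2, j]; rw [Finset.sum_comm]
  rw [Finset.sum_comm]
  refine Finset.sum_congr rfl fun i _ => Finset.sum_congr rfl fun j _ =>
    Finset.sum_congr rfl fun q _ => Finset.sum_congr rfl fun p _ => by ring

lemma conjTranspose_blockCol_mul_blockCol [CommSemiring α] [StarRing α] [DecidableEq ι]
    [DecidableEq m] (C : ι → Matrix m n α) :
    (blockCol C)ᴴ * blockCol C = ∑ i, (C i)ᴴ * C i := by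
  simpa [one_apply, ite_smul] using conjTranspose_blockCol_mul_kronecker_mul_blockCol C 1 1

end BlockColumn

section QubitIsometry

open ComplexStarModule

variable {n : Type*} [Fintype n] [DecidableEq n]

noncomputable def qubitIsometry (Z X : Matrix n n ℂ) : Matrix (Fin 2 × n) n ℂ :=
  blockCol ![posProj Z, X * negProj Z]

variable {Z X : Matrix n n ℂ}

lemma conjTranspose_qubitIsometry_mul_kronecker_mul (hZ : Z.IsHermitian) (hX : X.IsHermitian)
    (M : Matrix (Fin 2) (Fin 2) ℂ) (N : Matrix n n ℂ) :
    (qubitIsometry Z X)ᴴ * (M ⊗ₖ N) * qubitIsometry Z X =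
      M 0 0 • (posProj Z * N * posProj Z) + M 0 1 • (posProj Z * N * X * negProj Z) +
      M 1 0 • (negProj Z * X * N * posProj Z) +
      M 1 1 • (negProj Z * X * N * X * negProj Z) := by
  have hP : (posProj Z)ᴴ = posProj Z := hZ.isSelfAdjoint.posProj
  have hQ : (negProj Z)ᴴ = negProj Z := hZ.isSelfAdjoint.negProj
  rw [qubitIsometry, conjTranspose_blockCol_mul_kronecker_mul_blockCol]
  simp only [Fin.sum_univ_two, Matrix.cons_val_zero, Matrix.cons_val_one, conjTranspose_mul, hP,
    hQ, hX.eq, Matrix.mul_assoc]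
  abel

lemma qubitIsometry_isometry (hZ : Z.IsHermitian) (hX : X.IsHermitian) (hZ2 : Z * Z = 1)
    (hX2 : X * X = 1) : (qubitIsometry Z X)ᴴ * qubitIsometry Z X = 1 := by
  have hP : (posProj Z)ᴴ = posProj Z := hZ.isSelfAdjoint.posProj
  have hQ : (negProj Z)ᴴ = negProj Z := hZ.isSelfAdjoint.negProj
  rw [qubitIsometry, conjTranspose_blockCol_mul_blockCol]
  simp only [Fin.sum_univ_two, Matrix.cons_val_zero, Matrix.cons_val_one, conjTranspose_mul, hP,
    hQ, hX.eq, Matrix.mul_assoc, ← Matrix.mul_assoc X X, hX2, Matrix.one_mul]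
  rw [posProj_mul_self hZ2, negProj_mul_self hZ2, posProj_add_negProj]

lemma qubitIsometry_conj_pauliZ (hZ : Z.IsHermitian) (hX : X.IsHermitian) (hZ2 : Z * Z = 1)
    (hX2 : X * X = 1) :
    (qubitIsometry Z X)ᴴ * (pauliZ ⊗ₖ (1 : Matrix n n ℂ)) * qubitIsometry Z X = Z := by
  rw [conjTranspose_qubitIsometry_mul_kronecker_mul hZ hX]
  simp [pauliZ, Matrix.mul_assoc, hX2, posProj_mul_self hZ2, negProj_mul_self hZ2,
    ← sub_eq_add_neg, posProj_sub_negProj]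

lemma qubitIsometry_conj_pauliX (hZ : Z.IsHermitian) (hX : X.IsHermitian) (hX2 : X * X = 1) :
    (qubitIsometry Z X)ᴴ * (pauliX ⊗ₖ (1 : Matrix n n ℂ)) * qubitIsometry Z X =
      offDiagPart Z X := by
  rw [conjTranspose_qubitIsometry_mul_kronecker_mul hZ hX]
  simp [pauliX, offDiagPart, Matrix.mul_assoc, hX2]

lemma qubitIsometry_conj_realPart_imaginaryPart {X' : Matrix n n ℂ} (hZ : Z.IsHermitian)
    (hX : X.IsHermitian) (hX' : X'.IsHermitian) (hX2 : X * X = 1) :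
    (qubitIsometry Z X)ᴴ * (pauliX ⊗ₖ (ℜ (X * X') : Matrix n n ℂ) +
        pauliY ⊗ₖ (ℑ (X * X') : Matrix n n ℂ)) * qubitIsometry Z X = offDiagPart Z X' := by
  set AX : Matrix n n ℂ := ((ℜ (X * X') : selfAdjoint _) : Matrix n n ℂ)
  set AY : Matrix n n ℂ := ((ℑ (X * X') : selfAdjoint _) : Matrix n n ℂ)
  have hU : AX + Complex.I • AY = X * X' := realPart_add_I_smul_imaginaryPart _
  have hU' : AX - Complex.I • AY = X' * X := by
    simpa [AX, AY, star_smul, sub_eq_add_neg, hX.star_eq, hX'.star_eq] using congrArg star hU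
  have hblocks : (qubitIsometry Z X)ᴴ * (pauliX ⊗ₖ AX + pauliY ⊗ₖ AY) * qubitIsometry Z X =
      posProj Z * (AX - Complex.I • AY) * X * negProj Z +
        negProj Z * X * (AX + Complex.I • AY) * posProj Z := by
    rw [Matrix.mul_add, Matrix.add_mul, conjTranspose_qubitIsometry_mul_kronecker_mul hZ hX,
      conjTranspose_qubitIsometry_mul_kronecker_mul hZ hX]
    simp [pauliX, pauliY, Matrix.mul_add, Matrix.add_mul, Matrix.mul_sub, Matrix.sub_mul]
    abel
  have hXX : ∀ M : Matrix n n ℂ, X * (X * M) = M := fun M => by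
    rw [← Matrix.mul_assoc, hX2, Matrix.one_mul]
  rw [hblocks, hU, hU', offDiagPart]
  simp only [Matrix.mul_assoc, hXX]

end QubitIsometry

section StateNorm

variable {a b : ℕ}

lemma ofReal_vecNormSq (v : Fin a × Fin b → ℂ) : (vecNormSq v : ℂ) = star v ⬝ᵥ v := by
  simp only [vecNormSq, dotProduct, Pi.star_apply, Complex.star_def, Complex.conj_mul']
  push_cast
  rfl

lemma vecNormSq_nonneg (v : Fin a × Fin b → ℂ) : 0 ≤ vecNormSq v :=
  Finset.sum_nonneg fun _ _ => sq_nonneg _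

lemma vecNormSq_zero : vecNormSq (0 : Fin a × Fin b → ℂ) = 0 := by
  simp [vecNormSq]

lemma vecNormSq_smul (c : ℂ) (v : Fin a × Fin b → ℂ) :
    vecNormSq (c • v) = ‖c‖ ^ 2 * vecNormSq v := by
  simp [vecNormSq, Finset.mul_sum, mul_pow]

lemma vecNormSq_add_le (u v : Fin a × Fin b → ℂ) :
    vecNormSq (u + v) ≤ 2 * (vecNormSq u + vecNormSq v) := by
  rw [vecNormSq, vecNormSq, vecNormSq, ← Finset.sum_add_distrib, Finset.mul_sum]
  refine Finset.sum_le_sum fun p _ => ?_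
  calc ‖u p + v p‖ ^ 2 ≤ (‖u p‖ + ‖v p‖) ^ 2 := by gcongr; exact norm_add_le _ _
    _ ≤ 2 * (‖u p‖ ^ 2 + ‖v p‖ ^ 2) := add_sq_le

lemma vecNormSq_mulVec_of_mem_unitary {U : Matrix (Fin a × Fin b) (Fin a × Fin b) ℂ}
    (hU : U ∈ unitary (Matrix (Fin a × Fin b) (Fin a × Fin b) ℂ)) (v : Fin a × Fin b → ℂ) :
    vecNormSq (U *ᵥ v) = vecNormSq v := by
  rw [← Complex.ofReal_inj, ofReal_vecNormSq, ofReal_vecNormSq, star_mulVec, dotProduct_mulVec,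
    vecMul_vecMul, ← star_eq_conjTranspose, Unitary.star_mul_self_of_mem hU, vecMul_one]

variable {Z Y : Matrix (Fin a) (Fin a) ℂ} {ψ : Fin a × Fin b → ℂ}

lemma vecNormSq_anticomm_kronecker_one_mulVec_le_four
    (hZ : Z ∈ unitary (Matrix (Fin a) (Fin a) ℂ)) (hY : Y ∈ unitary (Matrix (Fin a) (Fin a) ℂ))
    (hψ : vecNormSq ψ = 1) :
    vecNormSq (((Z * Y + Y * Z) ⊗ₖ (1 : Matrix (Fin b) (Fin b) ℂ)) *ᵥ ψ) ≤ 4 := by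
  have hunit : ∀ U ∈ unitary (Matrix (Fin a) (Fin a) ℂ),
      vecNormSq ((U ⊗ₖ (1 : Matrix (Fin b) (Fin b) ℂ)) *ᵥ ψ) = 1 := fun U hU => by
    rw [vecNormSq_mulVec_of_mem_unitary (kronecker_mem_unitary hU (one_mem _)), hψ]
  rw [add_kronecker, add_mulVec]
  linarith [vecNormSq_add_le (((Z * Y) ⊗ₖ (1 : Matrix (Fin b) (Fin b) ℂ)) *ᵥ ψ)
    (((Y * Z) ⊗ₖ (1 : Matrix (Fin b) (Fin b) ℂ)) *ᵥ ψ), hunit _ (mul_mem hZ hY),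
    hunit _ (mul_mem hY hZ)]

lemma vecNormSq_half_mul_kronecker_one_mulVec (hZ : Z ∈ unitary (Matrix (Fin a) (Fin a) ℂ))
    (D : Matrix (Fin a) (Fin a) ℂ) (ψ : Fin a × Fin b → ℂ) :
    vecNormSq ((((1 / 2 : ℂ) • (Z * D)) ⊗ₖ (1 : Matrix (Fin b) (Fin b) ℂ)) *ᵥ ψ) =
      vecNormSq ((D ⊗ₖ (1 : Matrix (Fin b) (Fin b) ℂ)) *ᵥ ψ) / 4 := by
  rw [smul_kronecker, ← Matrix.mul_one (1 : Matrix (Fin b) (Fin b) ℂ), mul_kronecker_mul,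
    smul_mulVec, vecNormSq_smul, ← mulVec_mulVec,
    vecNormSq_mulVec_of_mem_unitary (kronecker_mem_unitary hZ (one_mem _))]
  norm_num
  ring

lemma div_four_le_sqrt {q δ : ℝ} (hq : 0 ≤ q) (hqδ : q ≤ δ) (hq4 : q ≤ 4) : q / 4 ≤ √δ := by
  rw [Real.le_sqrt (by positivity) (hq.trans hqδ)]
  nlinarith

lemma vecNormSq_sub_offDiagPart_kronecker_one_mulVec_le {δ : ℝ} (hZ : Z.IsHermitian)
    (hY : Y.IsHermitian) (hZ2 : Z * Z = 1) (hY2 : Y * Y = 1) (hψ : vecNormSq ψ = 1)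
    (hZY : vecNormSq (((Z * Y + Y * Z) ⊗ₖ (1 : Matrix (Fin b) (Fin b) ℂ)) *ᵥ ψ) ≤ δ) :
    vecNormSq (((Y - offDiagPart Z Y) ⊗ₖ (1 : Matrix (Fin b) (Fin b) ℂ)) *ᵥ ψ) ≤ √δ := by
  have hZu := hZ.isSelfAdjoint.mem_unitary_of_mul_self hZ2
  rw [sub_offDiagPart hZ2, vecNormSq_half_mul_kronecker_one_mulVec hZu]
  exact div_four_le_sqrt (vecNormSq_nonneg _) hZY <|
    vecNormSq_anticomm_kronecker_one_mulVec_le_four hZu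
      (hY.isSelfAdjoint.mem_unitary_of_mul_self hY2) hψ

end StateNorm

/-- If binary observables `Z, X, X'` on `H_A` satisfy `‖{Z,X}⊗Id|ψ⟩‖² ≤ δ` and
`‖{Z,X'}⊗Id|ψ⟩‖² ≤ δ`, then there are an isometry `V : H_A → ℂ²⊗H_{A'}` and
commuting Hermitian `A_X, A_Y` with `A_X² + A_Y² = Id` such that, up to
state-dependent error `O(√δ)`, `Z ≃ σ_Z⊗Id`, `X ≃ σ_X⊗Id`, and
`X' ≃ σ_X⊗A_X + σ_Y⊗A_Y`. -/
theorem stmt14 : ∃ Cu : ℝ, 0 < Cu ∧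
    ∀ (a b : ℕ) (Z X X' : Matrix (Fin a) (Fin a) ℂ) (ψ : Fin a × Fin b → ℂ) (δ : ℝ),
      0 ≤ δ → Z.IsHermitian → X.IsHermitian → X'.IsHermitian →
      Z * Z = 1 → X * X = 1 → X' * X' = 1 → vecNormSq ψ = 1 →
      vecNormSq (((Z * X + X * Z) ⊗ₖ (1 : Matrix (Fin b) (Fin b) ℂ)).mulVec ψ) ≤ δ →
      vecNormSq (((Z * X' + X' * Z) ⊗ₖ (1 : Matrix (Fin b) (Fin b) ℂ)).mulVec ψ) ≤ δ →
      ∃ (a' : ℕ) (V : Matrix (Fin 2 × Fin a') (Fin a) ℂ)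
        (AX AY : Matrix (Fin a') (Fin a') ℂ),
        Vᴴ * V = 1 ∧
        AX.IsHermitian ∧ AY.IsHermitian ∧ AX * AY = AY * AX ∧
        AX * AX + AY * AY = 1 ∧
        vecNormSq (((Z - Vᴴ * (pauliZ ⊗ₖ (1 : Matrix (Fin a') (Fin a') ℂ)) * V) ⊗ₖ
            (1 : Matrix (Fin b) (Fin b) ℂ)).mulVec ψ) ≤ Cu * Real.sqrt δ ∧
        vecNormSq (((X - Vᴴ * (pauliX ⊗ₖ (1 : Matrix (Fin a') (Fin a') ℂ)) * V) ⊗ₖ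
            (1 : Matrix (Fin b) (Fin b) ℂ)).mulVec ψ) ≤ Cu * Real.sqrt δ ∧
        vecNormSq (((X' - Vᴴ * (pauliX ⊗ₖ AX + pauliY ⊗ₖ AY) * V) ⊗ₖ
            (1 : Matrix (Fin b) (Fin b) ℂ)).mulVec ψ) ≤ Cu * Real.sqrt δ := by
  refine ⟨1, one_pos, fun a b Z X X' ψ δ _ hZ hX hX' hZ2 hX2 hX'2 hψ hZX hZX' => ?_⟩
  have hU : X * X' ∈ unitary (Matrix (Fin a) (Fin a) ℂ) :=
    mul_mem (hX.isSelfAdjoint.mem_unitary_of_mul_self hX2)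
      (hX'.isSelfAdjoint.mem_unitary_of_mul_self hX'2)
  obtain ⟨hnormal, hsq⟩ :=
    mem_unitary_iff_isStarNormal_and_realPart_sq_add_imaginaryPart_sq_eq_one.1 hU
  refine ⟨a, qubitIsometry Z X, realPart (X * X'), imaginaryPart (X * X'),
    qubitIsometry_isometry hZ hX hZ2 hX2, (realPart (X * X')).2, (imaginaryPart (X * X')).2,
    (Commute.realPart_imaginaryPart (X * X')).eq, by simpa only [sq] using hsq, ?_, ?_, ?_⟩
  · rw [qubitIsometry_conj_pauliZ hZ hX hZ2 hX2, sub_self, zero_kronecker, zero_mulVec,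
      vecNormSq_zero, one_mul]
    exact Real.sqrt_nonneg δ
  · rw [qubitIsometry_conj_pauliX hZ hX hX2, one_mul]
    exact vecNormSq_sub_offDiagPart_kronecker_one_mulVec_le hZ hX hZ2 hX2 hψ hZX
  · rw [qubitIsometry_conj_realPart_imaginaryPart hZ hX hX' hX2, one_mul]
    exact vecNormSq_sub_offDiagPart_kronecker_one_mulVec_le hZ hX' hZ2 hX'2 hψ hZX'
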